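/- If P commutes with H and with every h_α, then for all matrices ρ and all t ≥ 0 one has T^t(P ρ Q) = P T^t(ρ) Q whenever Q also commutes with H and all h_α; in particular the evolutions of the blocks P_i ρ P_j for commuting projectors P_i, P_j are mutually independent. -/

import Mathlib

open Matrix
open scoped Matrix.Norms.L2Operator ComplexOrder

/-- The GKS--Lindblad generator with Hamiltonian `H` and transition operators `h α`. -/
noncomputable def lindblad {n : ℕ} {ι : Type*} [Fintype ι]
    (H : Matrix (Fin n) (Fin n) ℂ) (h : ι → Matrix (Fin n) (Fin n) ℂ)
    (ρ : Matrix (Fin n) (Fin n) ℂ) : Matrix (Fin n) (Fin n) ℂ :=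
  -Complex.I • (H * ρ - ρ * H) +
    ∑ α, (h α * ρ * (h α)ᴴ - (1/2 : ℂ) • ((h α)ᴴ * h α * ρ + ρ * ((h α)ᴴ * h α)))

/-! The generator `D = lindblad H h` is Lipschitz, so `x' = D x` has unique solutions; since `D`
commutes with `ρ ↦ P ρ Q`, both `s ↦ T^s (P ρ Q)` and `s ↦ P (T^s ρ) Q` solve it with the same initial value. -/

theorem Commute.star_right_of_star_eq {R : Type*} [Semigroup R] [StarMul R] {a b : R}
    (ha : star a = a) (hab : Commute a b) : Commute a (star b) :=
  commute_star_comm.mp (by rwa [ha])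

theorem flow_commute_of_commute {E : Type*} [NormedAddCommGroup E] [NormedSpace ℝ E]
    {v : E → E} {K : NNReal} (hv : LipschitzWith K v) {T : ℝ → E → E}
    (hT0 : ∀ x, T 0 x = x) (hT : ∀ x t, HasDerivAt (fun s => T s x) (v (T t x)) t)
    (A : E →L[ℝ] E) (hA : ∀ x, v (A x) = A (v x)) (x : E) (t : ℝ) :
    T t (A x) = A (T t x) := by
  have hAT : ∀ s, HasDerivAt (fun s => A (T s x)) (v (A (T s x))) s := fun s => by
    rw [hA]
    exact A.hasFDerivAt.comp_hasDerivAt s (hT x s)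
  have := ODE_solution_unique_univ (v := fun _ => v) (s := fun _ => Set.univ) (t₀ := 0)
    (fun _ => hv.lipschitzOnWith) (fun s => ⟨hT (A x) s, trivial⟩) (fun s => ⟨hAT s, trivial⟩)
    (by simp only [hT0])
  exact congrFun this t

section Lindblad

variable {n : ℕ} {ι : Type*} [Fintype ι]
  (H : Matrix (Fin n) (Fin n) ℂ) (h : ι → Matrix (Fin n) (Fin n) ℂ)

noncomputable def lindbladLinearMap : Matrix (Fin n) (Fin n) ℂ →ₗ[ℂ] Matrix (Fin n) (Fin n) ℂ where
  toFun := lindblad H h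
  map_add' x y := by
    simp only [lindblad, mul_add, add_mul, smul_add, smul_sub, Finset.sum_add_distrib,
      Finset.sum_sub_distrib]
    abel
  map_smul' c x := by
    simp only [lindblad, Matrix.mul_smul, Matrix.smul_mul, smul_sub, smul_add, Finset.smul_sum,
      smul_comm c, RingHom.id_apply]

theorem lipschitzWith_lindblad :
    LipschitzWith ‖(lindbladLinearMap H h).toContinuousLinearMap‖₊ (lindblad H h) :=
  (lindbladLinearMap H h).toContinuousLinearMap.lipschitz

variable {H h} in
theorem lindblad_mul_mul {P Q : Matrix (Fin n) (Fin n) ℂ}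
    (hPH : Commute P H) (hPh : ∀ α, Commute P (h α)) (hPh' : ∀ α, Commute P (h α)ᴴ)
    (hQH : Commute Q H) (hQh : ∀ α, Commute Q (h α)) (hQh' : ∀ α, Commute Q (h α)ᴴ)
    (ρ : Matrix (Fin n) (Fin n) ℂ) :
    lindblad H h (P * ρ * Q) = P * lindblad H h ρ * Q := by
  simp only [lindblad, mul_add, add_mul, mul_sub, sub_mul, Finset.mul_sum, Finset.sum_mul,
    mul_smul_comm, smul_mul_assoc, mul_assoc, hPH.symm.left_comm, fun α => (hPh α).symm.left_comm,
    fun α => (hPh' α).symm.left_comm, hQH.eq, fun α => (hQh α).eq, fun α => (hQh' α).eq,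
    fun α => (hQh' α).left_comm]

end Lindblad

theorem stmt13_general {n : ℕ} {ι : Type*} [Fintype ι]
    (H : Matrix (Fin n) (Fin n) ℂ)
    (h : ι → Matrix (Fin n) (Fin n) ℂ)
    (T : ℝ → Matrix (Fin n) (Fin n) ℂ →ₗ[ℂ] Matrix (Fin n) (Fin n) ℂ)
    (hT0 : T 0 = LinearMap.id)
    (hTderiv : ∀ (ρ : Matrix (Fin n) (Fin n) ℂ) (t : ℝ),
      HasDerivAt (fun s => T s ρ) (lindblad H h (T t ρ)) t)
    (P Q : Matrix (Fin n) (Fin n) ℂ)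
    (hPh : Pᴴ = P) (hQh : Qᴴ = Q)
    (hPH : P * H = H * P) (hPhα : ∀ α, P * h α = h α * P)
    (hQH : Q * H = H * Q) (hQhα : ∀ α, Q * h α = h α * Q) :
    ∀ (ρ : Matrix (Fin n) (Fin n) ℂ) (t : ℝ), 0 ≤ t →
      T t (P * ρ * Q) = P * T t ρ * Q := by
  intro ρ t _
  have hD : ∀ ρ, lindblad H h (P * ρ * Q) = P * lindblad H h ρ * Q :=
    lindblad_mul_mul hPH hPhα (fun α => Commute.star_right_of_star_eq hPh (hPhα α))
      hQH hQhα (fun α => Commute.star_right_of_star_eq hQh (hQhα α))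
  exact flow_commute_of_commute (lipschitzWith_lindblad H h) (T := fun s => T s)
    (by simp [hT0]) hTderiv (ContinuousLinearMap.mulLeftRight ℝ _ P Q) hD ρ t

/-- If the orthogonal projectors `P` and `Q` both commute with `H` and with every `h α`,
then `T^t (P ρ Q) = P (T^t ρ) Q` for all `ρ` and all `t ≥ 0`: the blocks evolve
independently. -/
theorem stmt13 {n : ℕ} {ι : Type*} [Fintype ι]
    (H : Matrix (Fin n) (Fin n) ℂ) (hH : H.IsHermitian)
    (h : ι → Matrix (Fin n) (Fin n) ℂ)
    (T : ℝ → Matrix (Fin n) (Fin n) ℂ →ₗ[ℂ] Matrix (Fin n) (Fin n) ℂ)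
    (hT0 : T 0 = LinearMap.id)
    (hTderiv : ∀ (ρ : Matrix (Fin n) (Fin n) ℂ) (t : ℝ),
      HasDerivAt (fun s => T s ρ) (lindblad H h (T t ρ)) t)
    (P Q : Matrix (Fin n) (Fin n) ℂ)
    (hP : P * P = P) (hPh : Pᴴ = P) (hQ : Q * Q = Q) (hQh : Qᴴ = Q)
    (hPH : P * H = H * P) (hPhα : ∀ α, P * h α = h α * P)
    (hQH : Q * H = H * Q) (hQhα : ∀ α, Q * h α = h α * Q) :
    ∀ (ρ : Matrix (Fin n) (Fin n) ℂ) (t : ℝ), 0 ≤ t →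
      T t (P * ρ * Q) = P * T t ρ * Q :=
  stmt13_general H h T hT0 hTderiv P Q hPh hQh hPH hPhα hQH hQhα
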